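/- For all constants C₃, C₄, c₂ > 0, there exists κ > 0 such that for all x with 0 < |x| < κ, the series Σ_{n=0}^∞ |x|^{2^n} · C₃^n · C₄^{n²} converges and its sum is less than c₂. -/

import Mathlib

/-!
With `M = max 1 (max |C₃| |C₄|)` and `q = |x| M²`, the `n`-th term is at most
`|x|^{2^n} M^{n + n²} ≤ |x|^{2^n} M^{2^{n+1}} = q^{2^n} ≤ q^{n+1}`, so for `q` small the series is
dominated by the geometric series `Σ q^{n+1} = q / (1 - q)`, which is `< c₂` once `q < min 1 c₂ / 2`.
-/

lemma add_sq_le_two_pow_succ (n : ℕ) : n + n ^ 2 ≤ 2 ^ (n + 1) := by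
  induction n with
  | zero => norm_num
  | succ k ih =>
    rcases Nat.lt_or_ge k 2 with h | h
    · interval_cases k <;> norm_num
    · have h1 : 2 * k + 2 ≤ k + k ^ 2 := by nlinarith
      calc (k + 1) + (k + 1) ^ 2 = (k + k ^ 2) + (2 * k + 2) := by ring
        _ ≤ 2 ^ (k + 1) + 2 ^ (k + 1) := add_le_add ih (h1.trans ih)
        _ = 2 ^ (k + 2) := by ring

lemma abs_pow_two_pow_mul_pow_mul_pow_sq_le {r a b M : ℝ} (hr : 0 ≤ r) (hM : 1 ≤ M)
    (ha : |a| ≤ M) (hb : |b| ≤ M) (hq : r * M ^ 2 ≤ 1) (n : ℕ) :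
    |r ^ 2 ^ n * a ^ n * b ^ n ^ 2| ≤ (r * M ^ 2) ^ (n + 1) :=
  calc |r ^ 2 ^ n * a ^ n * b ^ n ^ 2| = r ^ 2 ^ n * (|a| ^ n * |b| ^ n ^ 2) := by
        rw [abs_mul, abs_mul, abs_pow, abs_pow, abs_pow, abs_of_nonneg hr, mul_assoc]
    _ ≤ r ^ 2 ^ n * M ^ (n + n ^ 2) := by
        rw [pow_add]
        gcongr
    _ ≤ r ^ 2 ^ n * M ^ 2 ^ (n + 1) := by
        gcongr
        exact add_sq_le_two_pow_succ n
    _ = (r * M ^ 2) ^ 2 ^ n := by rw [mul_pow, ← pow_mul, pow_succ, mul_comm 2]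
    _ ≤ (r * M ^ 2) ^ (n + 1) :=
        pow_le_pow_of_le_one (by positivity) hq (Nat.lt_two_pow_self (n := n))

lemma summable_and_tsum_le_of_abs_le_geometric {f : ℕ → ℝ} {q : ℝ} (hq₀ : 0 ≤ q) (hq₁ : q < 1)
    (hf : ∀ n, |f n| ≤ q ^ (n + 1)) : Summable f ∧ ∑' n, f n ≤ q / (1 - q) := by
  have hgeom : HasSum (fun n => q ^ (n + 1)) (q / (1 - q)) := by
    simpa only [pow_succ', div_eq_mul_inv] using (hasSum_geometric_of_lt_one hq₀ hq₁).mul_left q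
  have hsum : Summable f := Summable.of_norm_bounded hgeom.summable hf
  refine ⟨hsum, hgeom.tsum_eq ▸ ?_⟩
  exact hsum.tsum_le_tsum (fun n => (le_abs_self _).trans (hf n)) hgeom.summable

theorem stmt14_general (C₃ C₄ c₂ : ℝ) (hc₂ : 0 < c₂) :
    ∃ κ : ℝ, 0 < κ ∧ ∀ x : ℝ, 0 < |x| → |x| < κ →
      Summable (fun n : ℕ => |x| ^ (2 ^ n) * C₃ ^ n * C₄ ^ (n ^ 2)) ∧
      (∑' n : ℕ, |x| ^ (2 ^ n) * C₃ ^ n * C₄ ^ (n ^ 2)) < c₂ := by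
  set M : ℝ := max 1 (max |C₃| |C₄|)
  have hM : 1 ≤ M := le_max_left _ _
  have hM₂ : 0 < M ^ 2 := by positivity
  refine ⟨min 1 c₂ / 2 / M ^ 2, by positivity, fun x _ hxκ => ?_⟩
  set q := |x| * M ^ 2
  have hq : q < min 1 c₂ / 2 := (lt_div_iff₀ hM₂).mp hxκ
  have hq₀ : 0 ≤ q := by positivity
  have hq₁ : q < 1 / 2 := hq.trans_le (by gcongr; exact min_le_left _ _)
  obtain ⟨hsum, hle⟩ := summable_and_tsum_le_of_abs_le_geometric hq₀ (by linarith)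
    (abs_pow_two_pow_mul_pow_mul_pow_sq_le (abs_nonneg x) hM
      ((le_max_left _ _).trans (le_max_right _ _)) ((le_max_right _ _).trans (le_max_right _ _))
      (by linarith))
  refine ⟨hsum, hle.trans_lt ?_⟩
  calc q / (1 - q) ≤ 2 * q := by rw [div_le_iff₀ (by linarith)]; nlinarith
    _ < min 1 c₂ := by linarith
    _ ≤ c₂ := min_le_right _ _

/-- **Bounding lemma, second half.** The series `Σ |x|^{2^n} C₃^n C₄^{n²}` converges and
its sum is `< c₂` once `|x|` is small. -/
theorem stmt14 (C₃ C₄ c₂ : ℝ) (hC₃ : 0 < C₃) (hC₄ : 0 < C₄) (hc₂ : 0 < c₂) :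
    ∃ κ : ℝ, 0 < κ ∧ ∀ x : ℝ, 0 < |x| → |x| < κ →
      Summable (fun n : ℕ => |x| ^ (2 ^ n) * C₃ ^ n * C₄ ^ (n ^ 2)) ∧
      (∑' n : ℕ, |x| ^ (2 ^ n) * C₃ ^ n * C₄ ^ (n ^ 2)) < c₂ :=
  stmt14_general C₃ C₄ c₂ hc₂
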